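/- arXiv:0902.2690 — 3 statements merged into one kernel-verified Lean document; each statement's English description precedes it below -/
import Mathlib

section
/- Let (X, μ) be a measure space, let f ∈ L²(X, μ) be nonzero, and let E > 0. Let M : (0,∞) → [0,∞) be nonincreasing, and define M⁻¹(y) := inf{t > 0 : M(t) ≤ y} ∈ [0,∞] (with inf ∅ = ∞), and N(y) := y / M⁻¹(y) ∈ [0,∞] (with y/∞ = 0 and y/0 = ∞ for y > 0). Suppose that for every t > 0 there exist g_t, h_t ∈ L²(X, μ) with f = g_t + h_t almost everywhere, ‖g_t‖_{L^∞}² ≤ M(t) · E, and that t ↦ ‖h_t‖_{L²}² is measurable with ∫₀^∞ ‖h_t‖_{L²}² t^{-2} dt ≤ (ln 2) · E. Then ∫_X N(|f(x)|² / (4E)) dμ(x) ≤ ln 2 (the integral taken in the extended sense). -/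
/-!
Put `y = |f|² / (4E)`. Since `∫_{a < t} t⁻² dt = a⁻¹`, the integrand `N(y) = y / M⁻¹(y)` is
`∫_{M⁻¹(y) < t} y t⁻² dt`. For such `t` monotonicity gives `M(t) ≤ y`, so
`|g_t|² ≤ M(t) E ≤ |f|² / 4`; then `|h_t| ≥ |f| / 2`, i.e. `y ≤ |h_t|² / E`. Exchanging the two
integrals (Tonelli, on a σ-finite set outside which `f` vanishes) bounds the left-hand side by
`E⁻¹ ∫₀^∞ ‖h_t‖₂² t⁻² dt ≤ ln 2`.
-/

open MeasureTheory Set ENNReal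

lemma inv_sq_eqOn_rpow : EqOn (fun s : ℝ => s⁻¹ ^ 2) (fun s => s ^ (-2 : ℝ)) (Ioi 0) :=
  fun s hs => by simp [Real.rpow_neg (le_of_lt hs)]

lemma lintegral_Ioi_inv_sq {c : ℝ} (hc : 0 < c) :
    ∫⁻ s in Ioi c, ENNReal.ofReal (s⁻¹ ^ 2) = ENNReal.ofReal c⁻¹ := by
  rw [setLIntegral_congr_fun measurableSet_Ioi
      (fun s hs => congrArg _ (inv_sq_eqOn_rpow (hc.trans (mem_Ioi.1 hs)))),
    ← ofReal_integral_eq_lintegral_ofReal (integrableOn_Ioi_rpow_of_lt (by norm_num) hc)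
      ((ae_restrict_mem measurableSet_Ioi).mono fun s hs => Real.rpow_nonneg (hc.trans hs).le _),
    integral_Ioi_rpow_of_lt (by norm_num) hc]
  norm_num [Real.rpow_neg_one]

lemma lintegral_Ioi_zero_inv_sq : ∫⁻ s in Ioi (0 : ℝ), ENNReal.ofReal (s⁻¹ ^ 2) = ∞ := by
  rw [setLIntegral_congr_fun measurableSet_Ioi (fun s hs => congrArg _ (inv_sq_eqOn_rpow hs)),
    ← not_ne_iff, lintegral_ofReal_ne_top_iff_integrable]
  · exact not_integrableOn_Ioi_rpow _
  · exact (measurable_id.pow_const _).aestronglyMeasurable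
  · exact (ae_restrict_mem measurableSet_Ioi).mono fun s hs => Real.rpow_nonneg (le_of_lt hs) _

lemma setLIntegral_inv_sq_setOf_lt_ofReal (a : ℝ≥0∞) :
    ∫⁻ s in {s : ℝ | a < ENNReal.ofReal s}, ENNReal.ofReal (s⁻¹ ^ 2) = a⁻¹ := by
  rcases eq_or_ne a ∞ with rfl | ha
  · simp
  rcases eq_or_ne a 0 with rfl | ha0
  · simp only [ENNReal.ofReal_pos, ENNReal.inv_zero]
    exact lintegral_Ioi_zero_inv_sq
  have hset : {s : ℝ | a < ENNReal.ofReal s} = Ioi a.toReal := by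
    ext s; exact ENNReal.lt_ofReal_iff_toReal_lt ha
  rw [hset, lintegral_Ioi_inv_sq (ENNReal.toReal_pos ha0 ha), ENNReal.ofReal_inv_of_pos
    (ENNReal.toReal_pos ha0 ha), ENNReal.ofReal_toReal ha]

theorem lintegral_div_le_lintegral_inv_sq_of_measurable {X : Type*} [MeasurableSpace X]
    {μ : Measure X} [SFinite μ] {Y T : X → ℝ≥0∞} (hY : Measurable Y) (hT : Measurable T)
    (u : ℝ → X → ℝ≥0∞) (hu : ∀ t, 0 < t → ∀ᵐ x ∂μ, T x < ENNReal.ofReal t → Y x ≤ u t x) :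
    ∫⁻ x, Y x / T x ∂μ ≤ ∫⁻ t in Ioi 0, (∫⁻ x, u t x ∂μ) * ENNReal.ofReal (t⁻¹ ^ 2) := by
  set F : X → ℝ → ℝ≥0∞ := fun x t =>
    {t | T x < ENNReal.ofReal t}.indicator (fun t => Y x * ENNReal.ofReal (t⁻¹ ^ 2)) t
  have hF : Measurable (Function.uncurry F) :=
    Measurable.indicator (by fun_prop) (measurableSet_lt (hT.comp measurable_fst) (by fun_prop))
  have hYT : ∀ x, Y x / T x = ∫⁻ t in Ioi 0, F x t := by
    intro x
    have hsub : {t : ℝ | T x < ENNReal.ofReal t} ⊆ Ioi 0 :=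
      fun t ht => ENNReal.ofReal_pos.1 (zero_le.trans_lt ht)
    rw [lintegral_indicator (measurableSet_lt measurable_const (by fun_prop)),
      Measure.restrict_restrict (measurableSet_lt measurable_const (by fun_prop)),
      inter_eq_left.2 hsub, lintegral_const_mul _ (by fun_prop),
      setLIntegral_inv_sq_setOf_lt_ofReal, div_eq_mul_inv]
  calc ∫⁻ x, Y x / T x ∂μ = ∫⁻ t in Ioi 0, ∫⁻ x, F x t ∂μ := by
        simp_rw [hYT]; exact lintegral_lintegral_swap hF.aemeasurable
    _ ≤ ∫⁻ t in Ioi 0, (∫⁻ x, u t x ∂μ) * ENNReal.ofReal (t⁻¹ ^ 2) := by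
        refine setLIntegral_mono' measurableSet_Ioi fun t ht => ?_
        rw [← lintegral_mul_const' _ _ ENNReal.ofReal_ne_top]
        refine lintegral_mono_ae ((hu t ht).mono fun x hx => ?_)
        exact indicator_apply_le' (fun hlt => mul_le_mul_left (hx hlt) _) fun _ => zero_le

theorem lintegral_div_le_lintegral_inv_sq {X : Type*} [MeasurableSpace X] {μ : Measure X}
    [SFinite μ] {Y T : X → ℝ≥0∞} (hY : AEMeasurable Y μ) (hT : AEMeasurable T μ)
    (u : ℝ → X → ℝ≥0∞) (hu : ∀ t, 0 < t → ∀ᵐ x ∂μ, T x < ENNReal.ofReal t → Y x ≤ u t x) :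
    ∫⁻ x, Y x / T x ∂μ ≤ ∫⁻ t in Ioi 0, (∫⁻ x, u t x ∂μ) * ENNReal.ofReal (t⁻¹ ^ 2) := by
  have hYT : (fun x => Y x / T x) =ᵐ[μ] fun x => hY.mk Y x / hT.mk T x := by
    filter_upwards [hY.ae_eq_mk, hT.ae_eq_mk] with x hYx hTx
    rw [hYx, hTx]
  rw [lintegral_congr_ae hYT]
  refine lintegral_div_le_lintegral_inv_sq_of_measurable hY.measurable_mk hT.measurable_mk u
    fun t ht => ?_
  filter_upwards [hu t ht, hY.ae_eq_mk, hT.ae_eq_mk] with x hx hYx hTx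
  rw [← hYx, ← hTx]
  exact hx

lemma lintegral_div_const_of_ne_zero {X : Type*} [MeasurableSpace X] {μ : Measure X}
    {f : X → ℝ≥0∞} {c : ℝ≥0∞} (hc : c ≠ 0) : ∫⁻ x, f x / c ∂μ = (∫⁻ x, f x ∂μ) / c := by
  simp_rw [div_eq_mul_inv]
  exact lintegral_mul_const' _ _ (ENNReal.inv_ne_top.2 hc)

lemma eLpNorm_two_sq_eq_lintegral {X : Type*} [MeasurableSpace X] (μ : Measure X) (φ : X → ℝ) :
    eLpNorm φ 2 μ ^ 2 = ∫⁻ x, ‖φ x‖ₑ ^ 2 ∂μ := by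
  simpa using eLpNorm_nnreal_pow_eq_lintegral (f := φ) (μ := μ) (p := 2) two_ne_zero

theorem MeasureTheory.AEFinStronglyMeasurable.lintegral_comp_eq_setLIntegral_sigmaFiniteSet
    {X β : Type*} [MeasurableSpace X] {μ : Measure X} [TopologicalSpace β] [T2Space β] [Zero β]
    {f : X → β} (hf : AEFinStronglyMeasurable f μ) {φ : β → ℝ≥0∞} (hφ : φ 0 = 0) :
    ∫⁻ x, φ (f x) ∂μ = ∫⁻ x in hf.sigmaFiniteSet, φ (f x) ∂μ := by
  have hcompl : ∫⁻ x in hf.sigmaFiniteSetᶜ, φ (f x) ∂μ = 0 := by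
    rw [lintegral_congr_ae (hf.ae_eq_zero_compl.mono fun x hx => by rw [hx, Pi.zero_apply, hφ]),
      lintegral_zero]
  rw [← lintegral_add_compl _ hf.measurableSet, hcompl, add_zero]

noncomputable def generalizedInverse (M : ℝ → ℝ) (y : ℝ) : ℝ≥0∞ :=
  sInf {s : ℝ≥0∞ | ∃ t : ℝ, 0 < t ∧ M t ≤ y ∧ s = ENNReal.ofReal t}

lemma antitone_generalizedInverse (M : ℝ → ℝ) : Antitone (generalizedInverse M) :=
  fun _ _ hab => sInf_le_sInf fun _ ⟨t, ht, hMt, hs⟩ => ⟨t, ht, hMt.trans hab, hs⟩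

lemma le_of_generalizedInverse_lt {M : ℝ → ℝ} (hM : AntitoneOn M (Ioi 0)) {y t : ℝ}
    (ht : 0 < t) (h : generalizedInverse M y < ENNReal.ofReal t) : M t ≤ y := by
  obtain ⟨_, ⟨τ, hτ, hMτ, rfl⟩, hτt⟩ := sInf_lt_iff.1 h
  exact (hM hτ ht ((ENNReal.ofReal_lt_ofReal_iff ht).1 hτt).le).trans hMτ

lemma sq_div_four_le_sq_sub {a b : ℝ} (hb : b ^ 2 ≤ a ^ 2 / 4) : a ^ 2 / 4 ≤ (a - b) ^ 2 := by
  have h : |b| ≤ |a / 2| := sq_le_sq.1 (by linarith)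
  nlinarith [abs_sub_abs_le_abs_sub a b, abs_nonneg b, sq_abs (a - b), sq_abs a, abs_div a 2]

lemma ofReal_sq_div_le_of_eq_add {a b c m E : ℝ} (hE : 0 < E) (habc : a = b + c)
    (hb : ‖b‖ₑ ^ 2 ≤ ENNReal.ofReal (m * E)) (hm : m ≤ ‖a‖ ^ 2 / (4 * E)) :
    ENNReal.ofReal (‖a‖ ^ 2 / (4 * E)) ≤ ‖c‖ₑ ^ 2 / ENNReal.ofReal E := by
  rw [Real.enorm_eq_ofReal_abs, ← ENNReal.ofReal_pow (abs_nonneg _), sq_abs] at hb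
  have hmE : m * E ≤ a ^ 2 / 4 := by
    rw [Real.norm_eq_abs, sq_abs, le_div_iff₀ (by positivity)] at hm
    linarith
  have hb' : b ^ 2 ≤ a ^ 2 / 4 := by
    rcases (ENNReal.ofReal_le_ofReal_iff').1 hb with h | h <;> nlinarith [sq_nonneg a]
  have hc : a ^ 2 / 4 ≤ c ^ 2 := by simpa [habc] using sq_div_four_le_sq_sub hb'
  rw [Real.enorm_eq_ofReal_abs, ← ENNReal.ofReal_pow (abs_nonneg _), sq_abs,
    ← ENNReal.ofReal_div_of_pos hE]
  refine ENNReal.ofReal_le_ofReal ?_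
  rw [Real.norm_eq_abs, sq_abs, div_le_div_iff₀ (by positivity) hE]
  nlinarith

lemma ae_ofReal_sq_div_le_of_eq_add {X : Type*} [MeasurableSpace X] {μ : Measure X}
    {f g h : X → ℝ} {m E : ℝ} (hE : 0 < E) (hfgh : f =ᵐ[μ] g + h)
    (hg : eLpNorm g ∞ μ ^ 2 ≤ ENNReal.ofReal (m * E)) :
    ∀ᵐ x ∂μ, m ≤ ‖f x‖ ^ 2 / (4 * E) →
      ENNReal.ofReal (‖f x‖ ^ 2 / (4 * E)) ≤ ‖h x‖ₑ ^ 2 / ENNReal.ofReal E := by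
  rw [eLpNorm_exponent_top] at hg
  filter_upwards [hfgh, ae_le_eLpNormEssSup (f := g) (μ := μ)] with x hx hgx hm
  exact ofReal_sq_div_le_of_eq_add hE hx ((pow_le_pow_left' hgx 2).trans hg) hm

theorem stmt_1_general {X : Type*} [MeasurableSpace X] (μ : Measure X)
    (f : X → ℝ)
    (E : ℝ) (hE : 0 < E)
    (M : ℝ → ℝ)
    (hM_anti : ∀ a b, 0 < a → a ≤ b → M b ≤ M a)
    (Minv : ℝ → ℝ≥0∞)
    (hMinv : ∀ y, Minv y
      = sInf {s : ℝ≥0∞ | ∃ t : ℝ, 0 < t ∧ M t ≤ y ∧ s = ENNReal.ofReal t})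
    (N : ℝ → ℝ≥0∞) (hN : ∀ y, N y = ENNReal.ofReal y / Minv y)
    (g h : ℝ → X → ℝ)
    (h_dec : ∀ t, 0 < t → MemLp (g t) 2 μ ∧ MemLp (h t) 2 μ ∧
      f =ᵐ[μ] g t + h t ∧ (eLpNorm (g t) ⊤ μ) ^ 2 ≤ ENNReal.ofReal (M t * E))
    (h_int : ∫⁻ t in Ioi (0 : ℝ), (eLpNorm (h t) 2 μ) ^ 2 * ENNReal.ofReal (t⁻¹ ^ 2)
      ≤ ENNReal.ofReal (Real.log 2 * E)) :
    ∫⁻ x, N (‖f x‖ ^ 2 / (4 * E)) ∂μ ≤ ENNReal.ofReal (Real.log 2) := by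
  obtain rfl : Minv = generalizedInverse M := funext hMinv
  obtain ⟨hg₁, hh₁, hfgh₁, -⟩ := h_dec 1 one_pos
  have hf : MemLp f 2 μ := (hg₁.add hh₁).ae_eq hfgh₁.symm
  have hfσ := hf.aefinStronglyMeasurable two_ne_zero ofNat_ne_top
  set S := hfσ.sigmaFiniteSet
  have : SigmaFinite (μ.restrict S) := hfσ.sigmaFinite_restrict
  set y : X → ℝ := fun x => ‖f x‖ ^ 2 / (4 * E)
  have hy : AEMeasurable y (μ.restrict S) :=
    ((hf.1.aemeasurable.norm.pow_const 2).div_const _).restrict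
  have hdom : ∀ t, 0 < t → ∀ᵐ x ∂μ.restrict S, generalizedInverse M (y x) < ENNReal.ofReal t →
      ENNReal.ofReal (y x) ≤ ‖h t x‖ₑ ^ 2 / ENNReal.ofReal E := fun t ht => by
    obtain ⟨-, -, hfgh, hg⟩ := h_dec t ht
    filter_upwards [ae_restrict_of_ae (ae_ofReal_sq_div_le_of_eq_add hE hfgh hg)] with x hx hlt
    exact hx (le_of_generalizedInverse_lt (fun a ha b _ hab => hM_anti a b ha hab) ht hlt)
  have hE₀ : ENNReal.ofReal E ≠ 0 := (ENNReal.ofReal_pos.2 hE).ne'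
  calc ∫⁻ x, N (y x) ∂μ
      = ∫⁻ x in S, ENNReal.ofReal (y x) / generalizedInverse M (y x) ∂μ := by
        refine (hfσ.lintegral_comp_eq_setLIntegral_sigmaFiniteSet
          (φ := fun z => N (‖z‖ ^ 2 / (4 * E))) (by simp [hN])).trans ?_
        exact lintegral_congr fun x => hN _
    _ ≤ ∫⁻ t in Ioi 0, (∫⁻ x in S, ‖h t x‖ₑ ^ 2 / ENNReal.ofReal E ∂μ) * ENNReal.ofReal (t⁻¹ ^ 2) :=
        lintegral_div_le_lintegral_inv_sq hy.ennreal_ofReal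
          ((antitone_generalizedInverse M).measurable.comp_aemeasurable hy) _ hdom
    _ ≤ (∫⁻ t in Ioi 0, eLpNorm (h t) 2 μ ^ 2 * ENNReal.ofReal (t⁻¹ ^ 2)) / ENNReal.ofReal E := by
        simp_rw [lintegral_div_const_of_ne_zero hE₀, ← ENNReal.mul_div_right_comm,
          eLpNorm_two_sq_eq_lintegral]
        rw [lintegral_div_const_of_ne_zero hE₀]
        gcongr
        exact Measure.restrict_le_self
    _ ≤ ENNReal.ofReal (Real.log 2) :=
        div_le_of_le_mul (ENNReal.ofReal_mul (Real.log_nonneg one_le_two) ▸ h_int)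

/-- analytic core of Theorem 1.2, heat Sobolev–Orlicz inequality.
Given a heat-type decomposition `f = g t + h t` with `‖g t‖_∞² ≤ M(t)·E` and
`∫₀^∞ ‖h t‖₂² t⁻² dt ≤ (ln 2)·E`, one has `∫_X N(|f|²/(4E)) dμ ≤ ln 2`, where
`N(y) = y / M⁻¹(y)` and `M⁻¹(y) = inf {t > 0 | M t ≤ y}` (computed in `[0,∞]`,
with `inf ∅ = ∞`; the division in `[0,∞]` has `y/∞ = 0` and `y/0 = ∞` for `y > 0`). -/
theorem stmt_1 {X : Type*} [MeasurableSpace X] (μ : Measure X)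
    (f : X → ℝ) (hf : MemLp f 2 μ) (hf_ne : ¬ f =ᵐ[μ] 0)
    (E : ℝ) (hE : 0 < E)
    (M : ℝ → ℝ) (hM_nonneg : ∀ t, 0 < t → 0 ≤ M t)
    (hM_anti : ∀ a b, 0 < a → a ≤ b → M b ≤ M a)
    (Minv : ℝ → ℝ≥0∞)
    (hMinv : ∀ y, Minv y
      = sInf {s : ℝ≥0∞ | ∃ t : ℝ, 0 < t ∧ M t ≤ y ∧ s = ENNReal.ofReal t})
    (N : ℝ → ℝ≥0∞) (hN : ∀ y, N y = ENNReal.ofReal y / Minv y)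
    (g h : ℝ → X → ℝ)
    (h_dec : ∀ t, 0 < t → MemLp (g t) 2 μ ∧ MemLp (h t) 2 μ ∧
      f =ᵐ[μ] g t + h t ∧ (eLpNorm (g t) ⊤ μ) ^ 2 ≤ ENNReal.ofReal (M t * E))
    (h_meas : Measurable fun t : ℝ => (eLpNorm (h t) 2 μ) ^ 2)
    (h_int : ∫⁻ t in Ioi (0 : ℝ), (eLpNorm (h t) 2 μ) ^ 2 * ENNReal.ofReal (t⁻¹ ^ 2)
      ≤ ENNReal.ofReal (Real.log 2 * E)) :
    ∫⁻ x, N (‖f x‖ ^ 2 / (4 * E)) ∂μ ≤ ENNReal.ofReal (Real.log 2) :=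
  stmt_1_general μ f E hE M hM_anti Minv hMinv N hN g h h_dec h_int
end

section
/- Let (X, μ) be a measure space, let f ∈ L¹(X, μ) ∩ L²(X, μ) be nonzero, and let E > 0. Let G : (0,∞) → [0,∞) be nondecreasing, and define G⁻¹(y) := sup{λ > 0 : G(λ) ≤ y} ∈ [0,∞] (with sup ∅ = 0). Assume the H-Sobolev inequality ∫_X (|f(x)|²/(4E)) · G⁻¹(|f(x)|²/(4E)) dμ(x) ≤ 1 holds. Let φ : [0,∞) → [0,∞) be convex with φ(y) ≤ y · G⁻¹(y²) for all y ≥ 0. Then φ(‖f‖_{L²}² / (2√E · ‖f‖_{L¹})) ≤ 2√E / ‖f‖_{L¹}. -/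
/-!
Jensen's inequality for the probability measure `|f| dμ / ‖f‖₁`, in the form: integrating the
supporting line of `φ` at the mean `m = ‖f‖₂² / (2√E ‖f‖₁)` of `|f| / (2√E)` against `|f|` gives
`‖f‖₁ φ(m) ≤ ∫ |f| φ(|f| / (2√E))`. The hypothesis on `φ` bounds the integrand pointwise by
`2√E` times the integrand of the H-Sobolev inequality, whose integral is at most `1`.
-/

open MeasureTheory Set ENNReal

theorem ConvexOn.add_rightDeriv_mul_sub_le {S : Set ℝ} {φ : ℝ → ℝ} (hφ : ConvexOn ℝ S φ)
    {x y : ℝ} (hx : x ∈ interior S) (hy : y ∈ S) :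
    φ x + derivWithin φ (Ioi x) x * (y - x) ≤ φ y := by
  rcases lt_trichotomy y x with hyx | rfl | hxy
  · have h := (hφ.slope_le_leftDeriv_of_mem_interior hy hx hyx).trans
      (hφ.leftDeriv_le_rightDeriv_of_mem_interior hx)
    rw [slope_def_field, div_le_iff₀ (sub_pos.2 hyx)] at h
    linarith
  · simp
  · have h := hφ.rightDeriv_le_slope_of_mem_interior hx hy hxy
    rw [slope_def_field, le_div_iff₀ (sub_pos.2 hxy)] at h
    linarith

theorem ofReal_mul_map_div_le {φ : ℝ → ℝ} {K : ℝ → ℝ≥0∞}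
    (hφ : ∀ y, 0 ≤ y → ENNReal.ofReal (φ y) ≤ ENNReal.ofReal y * K (y ^ 2))
    {c t : ℝ} (hc : 0 < c) (ht : 0 ≤ t) :
    ENNReal.ofReal (t * φ (t / c))
      ≤ ENNReal.ofReal c * (ENNReal.ofReal ((t / c) ^ 2) * K ((t / c) ^ 2)) := by
  have ht_div : 0 ≤ t / c := div_nonneg ht hc.le
  calc ENNReal.ofReal (t * φ (t / c))
      = ENNReal.ofReal t * ENNReal.ofReal (φ (t / c)) := ENNReal.ofReal_mul ht
    _ ≤ ENNReal.ofReal t * (ENNReal.ofReal (t / c) * K ((t / c) ^ 2)) := by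
      gcongr; exact hφ _ ht_div
    _ = ENNReal.ofReal (t * (t / c)) * K ((t / c) ^ 2) := by
      rw [ENNReal.ofReal_mul ht, mul_assoc]
    _ = ENNReal.ofReal c * (ENNReal.ofReal ((t / c) ^ 2) * K ((t / c) ^ 2)) := by
      rw [← mul_assoc, ← ENNReal.ofReal_mul hc.le]
      congr 2
      field_simp

section

variable {X : Type*} [MeasurableSpace X] {μ : Measure X}

theorem ofReal_integral_le_lintegral_ofReal (h : X → ℝ) :
    ENNReal.ofReal (∫ x, h x ∂μ) ≤ ∫⁻ x, ENNReal.ofReal (h x) ∂μ := by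
  by_cases hh : Integrable h μ
  · refine ENNReal.ofReal_le_of_le_toReal ?_
    rw [integral_eq_lintegral_pos_part_sub_lintegral_neg_part hh]
    exact sub_le_self _ ENNReal.toReal_nonneg
  · simp [integral_undef hh]

theorem ConvexOn.ofReal_integral_mul_map_le_lintegral {S : Set ℝ} {φ : ℝ → ℝ}
    (hφ : ConvexOn ℝ S φ) {w g : X → ℝ} (hw : 0 ≤ w) (hg : ∀ x, g x ∈ S)
    (hw_int : Integrable w μ) (hwg_int : Integrable (fun x => w x * g x) μ)
    (hw_ne : ∫ x, w x ∂μ ≠ 0)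
    (hm : (∫ x, w x * g x ∂μ) / ∫ x, w x ∂μ ∈ interior S) :
    ENNReal.ofReal ((∫ x, w x ∂μ) * φ ((∫ x, w x * g x ∂μ) / ∫ x, w x ∂μ))
      ≤ ∫⁻ x, ENNReal.ofReal (w x * φ (g x)) ∂μ := by
  set m := (∫ x, w x * g x ∂μ) / ∫ x, w x ∂μ
  set k := derivWithin φ (Ioi m) m
  have h_tangent : ∫ x, w x * (φ m + k * (g x - m)) ∂μ = (∫ x, w x ∂μ) * φ m := by
    have h_expand : (fun x => w x * (φ m + k * (g x - m)))
        = fun x => (φ m - k * m) * w x + k * (w x * g x) := by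
      ext x; ring
    rw [h_expand, integral_add (hw_int.const_mul _) (hwg_int.const_mul _), integral_const_mul,
      integral_const_mul]
    have hm_mul : m * ∫ x, w x ∂μ = ∫ x, w x * g x ∂μ := div_mul_cancel₀ _ hw_ne
    linear_combination (-k) * hm_mul
  calc ENNReal.ofReal ((∫ x, w x ∂μ) * φ m)
      = ENNReal.ofReal (∫ x, w x * (φ m + k * (g x - m)) ∂μ) := by rw [h_tangent]
    _ ≤ ∫⁻ x, ENNReal.ofReal (w x * (φ m + k * (g x - m))) ∂μ :=
      ofReal_integral_le_lintegral_ofReal _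
    _ ≤ ∫⁻ x, ENNReal.ofReal (w x * φ (g x)) ∂μ := lintegral_mono fun x =>
      ENNReal.ofReal_le_ofReal <|
        mul_le_mul_of_nonneg_left (hφ.add_rightDeriv_mul_sub_le hm (hg x)) (hw x)

theorem sq_lpNorm_two {f : X → ℝ} (hf : AEStronglyMeasurable f μ) :
    lpNorm f 2 μ ^ 2 = ∫ x, ‖f x‖ ^ 2 ∂μ := by
  rw [lpNorm_eq_integral_norm_rpow_toReal two_ne_zero ofNat_ne_top hf]
  norm_num
  rw [← Real.sqrt_eq_rpow, Real.sq_sqrt (integral_nonneg fun _ => sq_nonneg _)]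

theorem lintegral_ofReal_mul_map_div_le {φ : ℝ → ℝ} {K : ℝ → ℝ≥0∞}
    (hφ : ∀ y, 0 ≤ y → ENNReal.ofReal (φ y) ≤ ENNReal.ofReal y * K (y ^ 2))
    {c : ℝ} (hc : 0 < c) {f : X → ℝ}
    (hK : ∫⁻ x, ENNReal.ofReal ((‖f x‖ / c) ^ 2) * K ((‖f x‖ / c) ^ 2) ∂μ ≤ 1) :
    ∫⁻ x, ENNReal.ofReal (‖f x‖ * φ (‖f x‖ / c)) ∂μ ≤ ENNReal.ofReal c := calc
  _ ≤ ∫⁻ x, ENNReal.ofReal c * (ENNReal.ofReal ((‖f x‖ / c) ^ 2) * K ((‖f x‖ / c) ^ 2)) ∂μ :=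
    lintegral_mono fun x => ofReal_mul_map_div_le hφ hc (norm_nonneg (f x))
  _ = ENNReal.ofReal c * ∫⁻ x, ENNReal.ofReal ((‖f x‖ / c) ^ 2) * K ((‖f x‖ / c) ^ 2) ∂μ :=
    lintegral_const_mul' _ _ ofReal_ne_top
  _ ≤ ENNReal.ofReal c := by simpa only [mul_one] using mul_le_mul_right hK _

end

theorem stmt_9_general {X : Type*} [MeasurableSpace X] (μ : Measure X)
    (f : X → ℝ) (hf1 : MemLp f 1 μ) (hf2 : MemLp f 2 μ) (hf_ne : ¬ f =ᵐ[μ] 0)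
    (E : ℝ) (hE : 0 < E)
    (Ginv : ℝ → ℝ≥0∞)
    (h_sob : ∫⁻ x, ENNReal.ofReal (‖f x‖ ^ 2 / (4 * E))
        * Ginv (‖f x‖ ^ 2 / (4 * E)) ∂μ ≤ 1)
    (φ : ℝ → ℝ) (hφ_conv : ConvexOn ℝ (Ici 0) φ)
    (hφ_le : ∀ y, 0 ≤ y → ENNReal.ofReal (φ y) ≤ ENNReal.ofReal y * Ginv (y ^ 2)) :
    φ ((eLpNorm f 2 μ).toReal ^ 2
        / (2 * Real.sqrt E * (eLpNorm f 1 μ).toReal))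
      ≤ 2 * Real.sqrt E / (eLpNorm f 1 μ).toReal := by
  rw [toReal_eLpNorm hf1.1, toReal_eLpNorm hf2.1]
  set c := 2 * Real.sqrt E
  have hc : 0 < c := by positivity
  have hc_sq : c ^ 2 = 4 * E := by rw [mul_pow, Real.sq_sqrt hE.le]; ring
  have h1_pos : 0 < lpNorm f 1 μ :=
    lpNorm_nonneg.lt_of_ne' (mt (lpNorm_eq_zero hf1 one_ne_zero).1 hf_ne)
  have h2_pos : 0 < lpNorm f 2 μ :=
    lpNorm_nonneg.lt_of_ne' (mt (lpNorm_eq_zero hf2 two_ne_zero).1 hf_ne)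
  have h_sq_div : ∀ x, ‖f x‖ * (‖f x‖ / c) = ‖f x‖ ^ 2 / c := fun x => by ring
  have h_mean : (∫ x, ‖f x‖ * (‖f x‖ / c) ∂μ) / ∫ x, ‖f x‖ ∂μ
      = lpNorm f 2 μ ^ 2 / (c * lpNorm f 1 μ) := by
    simp_rw [h_sq_div, integral_div, ← sq_lpNorm_two hf2.1, ← lpNorm_one_eq_integral_norm hf1.1]
    ring
  have h_jensen := hφ_conv.ofReal_integral_mul_map_le_lintegral (μ := μ)
    (w := fun x => ‖f x‖) (g := fun x => ‖f x‖ / c) (fun x => norm_nonneg _)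
    (fun x => div_nonneg (norm_nonneg _) hc.le) (memLp_one_iff_integrable.1 hf1).norm
    (by simpa only [h_sq_div] using (hf2.integrable_norm_pow two_ne_zero).div_const c)
    (by rw [← lpNorm_one_eq_integral_norm hf1.1]; exact h1_pos.ne')
    (by rw [h_mean, interior_Ici]; exact div_pos (pow_pos h2_pos 2) (mul_pos hc h1_pos))
  rw [h_mean, ← lpNorm_one_eq_integral_norm hf1.1] at h_jensen
  have h_sobolev := lintegral_ofReal_mul_map_div_le hφ_le hc (f := f) (μ := μ)
    (by simpa only [div_pow, hc_sq] using h_sob)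
  rw [le_div_iff₀ h1_pos, mul_comm]
  exact (ENNReal.ofReal_le_ofReal_iff hc.le).1 (h_jensen.trans h_sobolev)

/-- inequality (18) of the paper: Nash-type inequality deduced
from the H-Sobolev inequality by Jensen. If
`∫_X (|f|²/(4E)) G⁻¹(|f|²/(4E)) dμ ≤ 1` and `φ : [0,∞) → [0,∞)` is convex with
`φ(y) ≤ y·G⁻¹(y²)`, then `φ(‖f‖₂²/(2√E ‖f‖₁)) ≤ 2√E/‖f‖₁`. Here
`G⁻¹(y) = sup {λ > 0 | G λ ≤ y}` (in `[0,∞]`, `sup ∅ = 0`). -/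
theorem stmt_9 {X : Type*} [MeasurableSpace X] (μ : Measure X)
    (f : X → ℝ) (hf1 : MemLp f 1 μ) (hf2 : MemLp f 2 μ) (hf_ne : ¬ f =ᵐ[μ] 0)
    (E : ℝ) (hE : 0 < E)
    (G : ℝ → ℝ) (hG_nonneg : ∀ l, 0 < l → 0 ≤ G l)
    (hG_mono : ∀ a b, 0 < a → a ≤ b → G a ≤ G b)
    (Ginv : ℝ → ℝ≥0∞)
    (hGinv : ∀ y, Ginv y
      = sSup {t : ℝ≥0∞ | ∃ l : ℝ, 0 < l ∧ G l ≤ y ∧ t = ENNReal.ofReal l})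
    (h_sob : ∫⁻ x, ENNReal.ofReal (‖f x‖ ^ 2 / (4 * E))
        * Ginv (‖f x‖ ^ 2 / (4 * E)) ∂μ ≤ 1)
    (φ : ℝ → ℝ) (hφ_conv : ConvexOn ℝ (Ici 0) φ)
    (hφ_nonneg : ∀ y, 0 ≤ y → 0 ≤ φ y)
    (hφ_le : ∀ y, 0 ≤ y → ENNReal.ofReal (φ y) ≤ ENNReal.ofReal y * Ginv (y ^ 2)) :
    φ ((eLpNorm f 2 μ).toReal ^ 2
        / (2 * Real.sqrt E * (eLpNorm f 1 μ).toReal))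
      ≤ 2 * Real.sqrt E / (eLpNorm f 1 μ).toReal :=
  stmt_9_general μ f hf1 hf2 hf_ne E hE Ginv h_sob φ hφ_conv hφ_le
end

section
/- Let (X, μ) be a measure space, let f ∈ L¹(X, μ) ∩ L²(X, μ) be nonzero, and let E > 0. Let G : (0,∞) → [0,∞) be nondecreasing and right-continuous, define G⁻¹(y) := sup{λ > 0 : G(λ) ≤ y} ∈ [0,∞] (with sup ∅ = 0), and let C > 0 and φ : [0,∞) → [0,∞) be convex with C · y · G⁻¹(y²) ≤ φ(y) ≤ y · G⁻¹(y²) for all y ≥ 0. Assume φ(‖f‖_{L²}² / (2√E · ‖f‖_{L¹})) ≤ 2√E / ‖f‖_{L¹}. Then ‖f‖_{L²}⁴ ≤ 4E · ‖f‖_{L¹}² · G(4E / (C‖f‖_{L²}²)). -/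
open MeasureTheory Set ENNReal

/-!
Since `φ(y) ≥ C·y·G⁻¹(y²)`, inequality (18) at `y = ‖f‖₂²/(2√E‖f‖₁)` bounds `G⁻¹(y²)` by
`t = 4E/(C‖f‖₂²)`. By right-continuity of `G`, `G⁻¹(y²) ≤ t` forces `G(t) ≥ y²`: otherwise
`G < y²` on some interval `[t, t + ε)`, which would put points beyond `t` into the set whose
supremum is `G⁻¹(y²)`. Unfolding `y² = ‖f‖₂⁴/(4E‖f‖₁²)` gives the claim.
-/

/-- The paper's `G⁻¹`. -/
noncomputable def upperInv (G : ℝ → ℝ) (y : ℝ) : ℝ≥0∞ :=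
  sSup {s : ℝ≥0∞ | ∃ l : ℝ, 0 < l ∧ G l ≤ y ∧ s = ENNReal.ofReal l}

theorem le_of_upperInv_le {G : ℝ → ℝ} {t y : ℝ} (ht : 0 ≤ t)
    (hG : ContinuousWithinAt G (Ici t) t) (h : upperInv G y ≤ ENNReal.ofReal t) : y ≤ G t := by
  by_contra! hlt
  have hright : ∀ᶠ l in nhdsWithin t (Ioi t), G l < y :=
    (hG.eventually_lt_const hlt).filter_mono (nhdsWithin_mono t Ioi_subset_Ici_self)
  obtain ⟨l, hGl, htl⟩ := (hright.and self_mem_nhdsWithin).exists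
  rw [upperInv, sSup_le_iff] at h
  have hl_le := h _ ⟨l, ht.trans_lt htl, hGl.le, rfl⟩
  exact htl.not_ge ((ENNReal.ofReal_le_ofReal_iff ht).mp hl_le)

theorem ENNReal.le_ofReal_div_of_ofReal_mul_le {a : ℝ≥0∞} {b c : ℝ} (hc : 0 < c)
    (h : ENNReal.ofReal c * a ≤ ENNReal.ofReal b) : a ≤ ENNReal.ofReal (b / c) := by
  rw [ENNReal.ofReal_div_of_pos hc, ENNReal.le_div_iff_mul_le
    (Or.inl (ENNReal.ofReal_pos.mpr hc).ne') (Or.inl ENNReal.ofReal_ne_top), mul_comm]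
  exact h

theorem MeasureTheory.MemLp.toReal_eLpNorm_pos {X : Type*} [MeasurableSpace X]
    {μ : Measure X} {f : X → ℝ} {p : ℝ≥0∞} (hf : MemLp f p μ) (hp : p ≠ 0)
    (hf_ne : ¬ f =ᵐ[μ] 0) : 0 < (eLpNorm f p μ).toReal :=
  ENNReal.toReal_pos (by rwa [Ne, eLpNorm_eq_zero_iff hf.1 hp]) hf.2.ne

theorem nash_of_upperInv_bound {G : ℝ → ℝ} {E C a b : ℝ} (hE : 0 < E) (hC : 0 < C)
    (ha : 0 < a) (hb : 0 < b)
    (hG_rc : ContinuousWithinAt G (Ici (4 * E / (C * b ^ 2))) (4 * E / (C * b ^ 2)))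
    (hbound : ENNReal.ofReal C * ENNReal.ofReal (b ^ 2 / (2 * Real.sqrt E * a))
        * upperInv G ((b ^ 2 / (2 * Real.sqrt E * a)) ^ 2)
      ≤ ENNReal.ofReal (2 * Real.sqrt E / a)) :
    b ^ 4 ≤ 4 * E * a ^ 2 * G (4 * E / (C * b ^ 2)) := by
  set y := b ^ 2 / (2 * Real.sqrt E * a)
  set t := 4 * E / (C * b ^ 2)
  have hsqrtE : Real.sqrt E ^ 2 = E := Real.sq_sqrt hE.le
  have hy : 0 < y := by positivity
  have ht_eq : 2 * Real.sqrt E / a / (C * y) = t := by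
    simp only [y, t]
    field_simp
    linear_combination 4 * hsqrtE
  have hy_sq : y ^ 2 = b ^ 4 / (4 * E * a ^ 2) := by
    simp only [y]
    field_simp
    linear_combination (-4) * hsqrtE
  have hinv : upperInv G (y ^ 2) ≤ ENNReal.ofReal t := by
    rw [← ht_eq]
    refine ENNReal.le_ofReal_div_of_ofReal_mul_le (by positivity) ?_
    rwa [ENNReal.ofReal_mul hC.le]
  have hGt : b ^ 4 / (4 * E * a ^ 2) ≤ G t :=
    hy_sq ▸ le_of_upperInv_le (by positivity) hG_rc hinv
  rwa [div_le_iff₀' (by positivity)] at hGt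

theorem stmt_10_general {X : Type*} [MeasurableSpace X] (μ : Measure X)
    (f : X → ℝ) (hf1 : MemLp f 1 μ) (hf2 : MemLp f 2 μ) (hf_ne : ¬ f =ᵐ[μ] 0)
    (E : ℝ) (hE : 0 < E)
    (G : ℝ → ℝ)
    (hG_rc : ∀ l, 0 < l → ContinuousWithinAt G (Ici l) l)
    (Ginv : ℝ → ℝ≥0∞)
    (hGinv : ∀ y, Ginv y
      = sSup {t : ℝ≥0∞ | ∃ l : ℝ, 0 < l ∧ G l ≤ y ∧ t = ENNReal.ofReal l})
    (C : ℝ) (hC : 0 < C)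
    (φ : ℝ → ℝ)
    (hφ_ge : ∀ y, 0 ≤ y →
      ENNReal.ofReal C * ENNReal.ofReal y * Ginv (y ^ 2) ≤ ENNReal.ofReal (φ y))
    (h_nash : φ ((eLpNorm f 2 μ).toReal ^ 2
        / (2 * Real.sqrt E * (eLpNorm f 1 μ).toReal))
      ≤ 2 * Real.sqrt E / (eLpNorm f 1 μ).toReal) :
    (eLpNorm f 2 μ).toReal ^ 4
      ≤ 4 * E * (eLpNorm f 1 μ).toReal ^ 2
        * G (4 * E / (C * (eLpNorm f 2 μ).toReal ^ 2)) := by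
  have ha := hf1.toReal_eLpNorm_pos one_ne_zero hf_ne
  have hb := hf2.toReal_eLpNorm_pos two_ne_zero hf_ne
  have hGinv_eq : Ginv = upperInv G := funext hGinv
  subst hGinv_eq
  refine nash_of_upperInv_bound hE hC ha hb (hG_rc _ (by positivity)) ?_
  exact (hφ_ge _ (by positivity)).trans (ENNReal.ofReal_le_ofReal h_nash)

/-- inequality (19) of the paper. If `G` is nondecreasing and
right-continuous on `(0,∞)`, `φ : [0,∞) → [0,∞)` is convex with
`C·y·G⁻¹(y²) ≤ φ(y) ≤ y·G⁻¹(y²)`, and the Nash-type inequality (18)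
`φ(‖f‖₂²/(2√E ‖f‖₁)) ≤ 2√E/‖f‖₁` holds, then
`‖f‖₂⁴ ≤ 4E ‖f‖₁² G(4E/(C‖f‖₂²))`. Here
`G⁻¹(y) = sup {λ > 0 | G λ ≤ y}` (in `[0,∞]`, `sup ∅ = 0`). -/
theorem stmt_10 {X : Type*} [MeasurableSpace X] (μ : Measure X)
    (f : X → ℝ) (hf1 : MemLp f 1 μ) (hf2 : MemLp f 2 μ) (hf_ne : ¬ f =ᵐ[μ] 0)
    (E : ℝ) (hE : 0 < E)
    (G : ℝ → ℝ) (hG_nonneg : ∀ l, 0 < l → 0 ≤ G l)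
    (hG_mono : ∀ a b, 0 < a → a ≤ b → G a ≤ G b)
    (hG_rc : ∀ l, 0 < l → ContinuousWithinAt G (Ici l) l)
    (Ginv : ℝ → ℝ≥0∞)
    (hGinv : ∀ y, Ginv y
      = sSup {t : ℝ≥0∞ | ∃ l : ℝ, 0 < l ∧ G l ≤ y ∧ t = ENNReal.ofReal l})
    (C : ℝ) (hC : 0 < C)
    (φ : ℝ → ℝ) (hφ_conv : ConvexOn ℝ (Ici 0) φ)
    (hφ_nonneg : ∀ y, 0 ≤ y → 0 ≤ φ y)
    (hφ_ge : ∀ y, 0 ≤ y →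
      ENNReal.ofReal C * ENNReal.ofReal y * Ginv (y ^ 2) ≤ ENNReal.ofReal (φ y))
    (hφ_le : ∀ y, 0 ≤ y → ENNReal.ofReal (φ y) ≤ ENNReal.ofReal y * Ginv (y ^ 2))
    (h_nash : φ ((eLpNorm f 2 μ).toReal ^ 2
        / (2 * Real.sqrt E * (eLpNorm f 1 μ).toReal))
      ≤ 2 * Real.sqrt E / (eLpNorm f 1 μ).toReal) :
    (eLpNorm f 2 μ).toReal ^ 4
      ≤ 4 * E * (eLpNorm f 1 μ).toReal ^ 2
        * G (4 * E / (C * (eLpNorm f 2 μ).toReal ^ 2)) :=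
  stmt_10_general μ f hf1 hf2 hf_ne E hE G hG_rc Ginv hGinv C hC φ hφ_ge h_nash
end
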